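/- Let H be a finite-dimensional complex Hilbert space. Let f:(0,∞)→(0,∞) be continuous with lim_{ε→0⁺} f(ε)=0, and let g:[0,∞)→[0,∞) be an injective continuous function with g(0)=0; let f₀ be the continuous extension of f with f₀(0)=0, and write D'_{f,g}(A‖B) = tr g(f₀(B) A f₀(B)) for density operators A,B. Suppose φ: S(H) → S(H) satisfies D'_{f,g}(φ(A)‖φ(B)) = D'_{f,g}(A‖B) for all A, B ∈ S(H). Then φ maps rank-one projections to rank-one projections, and tr(φ(P)φ(Q)) = tr(PQ) for all rank-one projections P, Q on H. -/

import Mathlib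

open Matrix
open scoped ComplexOrder

/-- Apply a real function to (the eigenvalues of) a Hermitian matrix via the
spectral decomposition (functional calculus); junk value `0` otherwise. -/
noncomputable def matFun {n : ℕ} (h : ℝ → ℝ) (A : Matrix (Fin n) (Fin n) ℂ) :
    Matrix (Fin n) (Fin n) ℂ :=
  if hA : A.IsHermitian then hA.cfc h else 0

/-- The (real part of the) trace of a complex matrix. -/
noncomputable def retr {n : ℕ} (M : Matrix (Fin n) (Fin n) ℂ) : ℝ := M.trace.re

/-- Real power of a positive semidefinite matrix via the spectral decomposition. -/
noncomputable def rpowMat {n : ℕ} (A : Matrix (Fin n) (Fin n) ℂ) (r : ℝ) :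
    Matrix (Fin n) (Fin n) ℂ := matFun (fun t => t ^ r) A

/-- Density operators: positive semidefinite matrices of trace `1`. -/
def Density (n : ℕ) := {A : Matrix (Fin n) (Fin n) ℂ // A.PosSemidef ∧ A.trace = 1}

/-- `supp A ⊆ supp B`, i.e. the range of `A` is contained in the range of `B`. -/
def suppLE {n : ℕ} (A B : Matrix (Fin n) (Fin n) ℂ) : Prop :=
  LinearMap.range (Matrix.toLin' A) ≤ LinearMap.range (Matrix.toLin' B)

/-- `supp A ⟂ supp B`: the ranges of `A` and `B` are orthogonal. -/
def suppOrth {n : ℕ} (A B : Matrix (Fin n) (Fin n) ℂ) : Prop :=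
  ∀ x y : Fin n → ℂ, star (A.mulVec x) ⬝ᵥ B.mulVec y = 0

/-- The extension `f₀` of `f : (0,∞) → (0,∞)` to `[0,∞)` with `f₀ 0 = 0`. -/
noncomputable def extZero (f : ℝ → ℝ) : ℝ → ℝ := fun t => if 0 < t then f t else 0

/-- The generalized divergence `D'_{f,g}(A‖B) = tr g(f₀(B) A f₀(B))` (real-valued version,
used when `lim_{ε→0⁺} f(ε) = 0`). -/
noncomputable def Dfg {n : ℕ} (f g : ℝ → ℝ) (A B : Matrix (Fin n) (Fin n) ℂ) : ℝ :=
  retr (matFun g (matFun (extZero f) B * A * matFun (extZero f) B))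

open scoped Classical in
/-- The generalized divergence `D'_{f,g}(A‖B)`: equal to `tr g(f₀(B) A f₀(B))` if
`supp A ⊆ supp B` and `∞` otherwise (used when `lim_{ε→0⁺} f(ε) = ∞`). -/
noncomputable def DfgE {n : ℕ} (f g : ℝ → ℝ) (A B : Matrix (Fin n) (Fin n) ℂ) : EReal :=
  if suppLE A B then ((Dfg f g A B : ℝ) : EReal) else ⊤

open scoped Classical in
/-- The quantum Rényi divergence `D_α(A‖B)` of density operators `A, B`
(with the convention `tr A = 1`), with values in the extended reals. -/
noncomputable def Dalpha {n : ℕ} (α : ℝ) (A B : Matrix (Fin n) (Fin n) ℂ) : EReal :=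
  if (α < 1 ∧ ¬ suppOrth A B) ∨ (1 < α ∧ suppLE A B) then
    (((α - 1)⁻¹ * Real.log (retr (rpowMat
      (rpowMat B ((1 - α) / (2 * α)) * A * rpowMat B ((1 - α) / (2 * α))) α)) : ℝ) : EReal)
  else ⊤

/-- The quantum Rényi divergence on the cone of positive definite matrices
(a finite real number there). -/
noncomputable def DalphaPD {n : ℕ} (α : ℝ) (A B : Matrix (Fin n) (Fin n) ℂ) : ℝ :=
  (α - 1)⁻¹ * Real.log ((retr A)⁻¹ * retr (rpowMat
    (rpowMat B ((1 - α) / (2 * α)) * A * rpowMat B ((1 - α) / (2 * α))) α))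

/-- Rank-one (orthogonal) projections: `P = x ⊗ x` for a unit vector `x`. -/
def IsRankOneProj {n : ℕ} (P : Matrix (Fin n) (Fin n) ℂ) : Prop :=
  ∃ x : Fin n → ℂ, star x ⬝ᵥ x = 1 ∧ P = Matrix.vecMulVec x (star x)

/-! `D'_{f,g}(A‖B) = tr g(f₀(B) A f₀(B))` vanishes exactly when `AB = 0`: `g` and `f₀` vanish only
at `0`, and `f₀(B) A f₀(B) = 0` iff `A f₀(B) = 0` iff `AB = 0`. Hence `φ` preserves orthogonality of
densities in both directions. A Hermitian `A` has rank `≤ n - k` iff it is orthogonal to `k`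
pairwise orthogonal densities, so `φ` sends densities of rank one, i.e. rank-one projections, to
densities of rank one. For `P = x ⊗ x` and `Q = y ⊗ y` one computes
`D'_{f,g}(P‖Q) = g(f(1)² |⟨x, y⟩|²)` and `tr PQ = |⟨x, y⟩|²`, and `g` is injective. -/

namespace Matrix

variable {𝕜 l m n : Type*} [RCLike 𝕜] [Fintype n]

theorem PosSemidef.conjTranspose_mul_mul_same_eq_zero_iff [Fintype m] {A : Matrix n n 𝕜}
    (hA : A.PosSemidef) (C : Matrix n m 𝕜) : Cᴴ * A * C = 0 ↔ A * C = 0 := by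
  classical
  refine ⟨fun h => ext_of_mulVec_single fun i => ?_,
    fun h => by rw [Matrix.mul_assoc, h, Matrix.mul_zero]⟩
  rw [← mulVec_mulVec, zero_mulVec, ← hA.dotProduct_mulVec_zero_iff, dotProduct_mulVec,
    star_mulVec, ← dotProduct_mulVec, mulVec_mulVec, ← dotProduct_mulVec, mulVec_mulVec,
    ← Matrix.mul_assoc, h, zero_mulVec, dotProduct_zero]

theorem rank_add_card_le_of_mul_eq_zero {ι : Type*} [Fintype ι] [Finite l]
    {A : Matrix l n 𝕜} {C : ι → Matrix n m 𝕜} (hC : ∀ i, C i ≠ 0)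
    (horth : Pairwise fun i j => (C i)ᴴ * C j = 0) (hAC : ∀ i, A * C i = 0) :
    A.rank + Fintype.card ι ≤ Fintype.card n := by
  classical
  have hcol : ∀ i, ∃ k, (fun a => C i a k) ≠ 0 := fun i => by
    by_contra! h
    exact hC i (ext fun a k => congrFun (h k) a)
  choose k hk using hcol
  -- the columns of `W` are pairwise orthogonal, nonzero, and killed by `A`
  set W : Matrix n ι 𝕜 := of fun a i => C i a (k i)
  have hAW : A * W = 0 := by
    ext a i
    simpa [W, mul_apply] using congrFun₂ (hAC i) a (k i)
  have hWW : Wᴴ * W = diagonal fun i => ((C i)ᴴ * C i) (k i) (k i) := by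
    ext i j
    rcases eq_or_ne i j with rfl | hij
    · simp [W, mul_apply]
    · simpa [W, mul_apply, hij] using congrFun₂ (horth hij) (k i) (k j)
  have hW : W.rank = Fintype.card ι := by
    have hd : ∀ i, ((C i)ᴴ * C i) (k i) (k i) ≠ 0 := fun i => by
      simpa [mul_apply, dotProduct] using mt dotProduct_star_self_eq_zero.1 (hk i)
    rw [← rank_conjTranspose_mul_self, hWW, rank_diagonal]
    exact Fintype.card_congr (Equiv.subtypeUnivEquiv hd)
  simpa [hW] using rank_add_rank_le_card_of_mul_eq_zero hAW

variable [DecidableEq n]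

theorem continuousOn_spectrum (h : ℝ → ℝ) (A : Matrix n n 𝕜) :
    ContinuousOn h (spectrum ℝ A) :=
  A.finite_real_spectrum.continuousOn h

theorem IsHermitian.trace_cfc {A : Matrix n n 𝕜} (hA : A.IsHermitian) (h : ℝ → ℝ) :
    (cfc h A).trace = ∑ i, (h (hA.eigenvalues i) : 𝕜) := by
  rw [hA.cfc_eq, IsHermitian.cfc, Unitary.conjStarAlgAut_apply, trace_mul_cycle,
    Unitary.coe_star_mul_self, one_mul, trace_diagonal]
  rfl

theorem mul_cfc_eq_zero_of_mul_cfc_eq_zero {A : Matrix m n 𝕜} {B : Matrix n n 𝕜}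
    {h k : ℝ → ℝ} (hhk : ∀ t ∈ spectrum ℝ B, k t = 0 → h t = 0) (hk : A * cfc k B = 0) :
    A * cfc h B = 0 := by
  have h_eq : cfc h B = cfc k B * cfc (fun t => h t / k t) B := by
    rw [← cfc_mul _ _ _ (continuousOn_spectrum _ _) (continuousOn_spectrum _ _)]
    refine cfc_congr fun t ht => ?_
    by_cases h0 : k t = 0
    · simp [hhk t ht h0]
    · field_simp
  rw [h_eq, ← Matrix.mul_assoc, hk, Matrix.zero_mul]

theorem mul_cfc_eq_zero_iff {A : Matrix m n 𝕜} {B : Matrix n n 𝕜} (hB : B.IsHermitian)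
    {h : ℝ → ℝ} (hh : ∀ t ∈ spectrum ℝ B, h t = 0 ↔ t = 0) :
    A * cfc h B = 0 ↔ A * B = 0 := by
  conv_rhs => rw [← cfc_id' ℝ B]
  exact ⟨mul_cfc_eq_zero_of_mul_cfc_eq_zero fun t ht => (hh t ht).1,
    mul_cfc_eq_zero_of_mul_cfc_eq_zero fun t ht => (hh t ht).2⟩

theorem IsHermitian.star_eigenvectorBasis_dotProduct {A : Matrix n n 𝕜} (hA : A.IsHermitian)
    (a b : n) :
    star ⇑(hA.eigenvectorBasis a) ⬝ᵥ ⇑(hA.eigenvectorBasis b) = if a = b then 1 else 0 := by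
  rw [dotProduct_comm, ← EuclideanSpace.inner_eq_star_dotProduct]
  exact orthonormal_iff_ite.1 hA.eigenvectorBasis.orthonormal a b

end Matrix

theorem cfc_smul_of_isIdempotentElem {A : Type*} [Ring A] [StarRing A] [Algebra ℝ A]
    [TopologicalSpace A] [ContinuousFunctionalCalculus ℝ A IsSelfAdjoint]
    [ContinuousMap.UniqueHom ℝ A] {p : A} (hp : IsIdempotentElem p) (hsa : IsSelfAdjoint p)
    {h : ℝ → ℝ} (h0 : h 0 = 0) (c : ℝ) : cfc h (c • p) = h c • p := by
  rw [← cfc_comp_smul c h p (((hp.finite_spectrum ℝ).image _).continuousOn h)]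
  calc cfc (fun t => h (c • t)) p = cfc (fun t => h c * t) p := by
        refine cfc_congr fun t ht => ?_
        rcases hp.spectrum_subset ℝ ht with rfl | rfl <;> simp [h0]
    _ = h c • p := cfc_const_mul_id _ _

variable {n : ℕ}

theorem matFun_eq_cfc (h : ℝ → ℝ) (A : Matrix (Fin n) (Fin n) ℂ) : matFun h A = cfc h A := by
  unfold matFun
  split_ifs with hA
  · exact (hA.cfc_eq h).symm
  · exact (cfc_apply_of_not_predicate A hA).symm

theorem extZero_eq_zero_iff {f : ℝ → ℝ} (hf : ∀ t ∈ Set.Ioi (0:ℝ), f t ≠ 0) {t : ℝ}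
    (ht : 0 ≤ t) : extZero f t = 0 ↔ t = 0 := by
  unfold extZero
  split_ifs with h
  · simp [hf t h, h.ne']
  · simp only [true_iff]
    linarith [not_lt.1 h]

theorem retr_cfc_eq_zero_iff {X : Matrix (Fin n) (Fin n) ℂ} (hX : X.PosSemidef) {g : ℝ → ℝ}
    (hg_nonneg : ∀ t ∈ Set.Ici (0:ℝ), 0 ≤ g t) (hg_zero : ∀ t ∈ Set.Ici (0:ℝ), g t = 0 ↔ t = 0) :
    retr (cfc g X) = 0 ↔ X = 0 := by
  have hev := hX.eigenvalues_nonneg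
  rw [retr, hX.isHermitian.trace_cfc, Complex.re_sum]
  simp only [← RCLike.re_to_complex, RCLike.ofReal_re]
  rw [Finset.sum_eq_zero_iff_of_nonneg fun i _ => hg_nonneg _ (hev i),
    ← hX.isHermitian.eigenvalues_eq_zero_iff]
  simp [funext_iff, hg_zero _ (hev _)]

theorem dfg_eq_zero_iff {f g : ℝ → ℝ} (hf : ∀ t ∈ Set.Ioi (0:ℝ), f t ≠ 0)
    (hg_nonneg : ∀ t ∈ Set.Ici (0:ℝ), 0 ≤ g t) (hg_zero : ∀ t ∈ Set.Ici (0:ℝ), g t = 0 ↔ t = 0)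
    {A B : Matrix (Fin n) (Fin n) ℂ} (hA : A.PosSemidef) (hB : B.PosSemidef) :
    Dfg f g A B = 0 ↔ A * B = 0 := by
  set C := cfc (extZero f) B
  have hC : Cᴴ = C := cfc_predicate (extZero f) B
  have hf₀ : ∀ t ∈ spectrum ℝ B, extZero f t = 0 ↔ t = 0 := by
    rw [hB.isHermitian.spectrum_real_eq_range_eigenvalues]
    rintro _ ⟨i, rfl⟩
    exact extZero_eq_zero_iff hf (hB.eigenvalues_nonneg i)
  have hCAC : C * A * C = Cᴴ * A * C := by rw [hC]
  rw [Dfg, matFun_eq_cfc, matFun_eq_cfc, hCAC,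
    retr_cfc_eq_zero_iff (hA.conjTranspose_mul_mul_same C) hg_nonneg hg_zero,
    hA.conjTranspose_mul_mul_same_eq_zero_iff, mul_cfc_eq_zero_iff hB.isHermitian hf₀]

theorem isIdempotentElem_vecMulVec_star {x : Fin n → ℂ} (hx : star x ⬝ᵥ x = 1) :
    IsIdempotentElem (vecMulVec x (star x)) := by
  rw [IsIdempotentElem, vecMulVec_mul_vecMulVec, hx, one_smul]

theorem star_dotProduct_mul_star_dotProduct (x y : Fin n → ℂ) :
    (star y ⬝ᵥ x) * (star x ⬝ᵥ y) = Complex.normSq (star x ⬝ᵥ y) := by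
  rw [Complex.normSq_eq_conj_mul_self]
  simp [dotProduct, mul_comm]

theorem trace_vecMulVec_mul_vecMulVec (x y : Fin n → ℂ) :
    (vecMulVec x (star x) * vecMulVec y (star y)).trace = Complex.normSq (star x ⬝ᵥ y) := by
  rw [vecMulVec_mul_vecMulVec, trace_vecMulVec, dotProduct_smul, smul_eq_mul,
    dotProduct_comm x, mul_comm, star_dotProduct_mul_star_dotProduct]

theorem vecMulVec_mul_vecMulVec_mul_vecMulVec (x y : Fin n → ℂ) :
    vecMulVec y (star y) * vecMulVec x (star x) * vecMulVec y (star y) =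
      Complex.normSq (star x ⬝ᵥ y) • vecMulVec y (star y) := by
  rw [vecMulVec_mul_vecMulVec, vecMulVec_mul_vecMulVec, smul_dotProduct, smul_eq_mul,
    star_dotProduct_mul_star_dotProduct, vecMulVec_smul, Complex.coe_smul]

theorem dfg_vecMulVec {f g : ℝ → ℝ} (hg0 : g 0 = 0) {x y : Fin n → ℂ} (hy : star y ⬝ᵥ y = 1) :
    Dfg f g (vecMulVec x (star x)) (vecMulVec y (star y)) =
      g (f 1 ^ 2 * Complex.normSq (star x ⬝ᵥ y)) := by
  have hQ := isIdempotentElem_vecMulVec_star hy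
  have hQsa : IsSelfAdjoint (vecMulVec y (star y)) := (posSemidef_vecMulVec_self_star y).1
  have hf₀ := cfc_smul_of_isIdempotentElem hQ hQsa (h := extZero f) (by simp [extZero]) 1
  rw [one_smul, show extZero f 1 = f 1 by simp [extZero]] at hf₀
  rw [Dfg, matFun_eq_cfc, matFun_eq_cfc, hf₀, smul_mul_assoc, mul_smul_comm, smul_mul_assoc,
    vecMulVec_mul_vecMulVec_mul_vecMulVec, smul_smul, smul_smul,
    cfc_smul_of_isIdempotentElem hQ hQsa hg0, retr, trace_smul, trace_vecMulVec,
    dotProduct_comm y, hy, Complex.smul_re, Complex.one_re, smul_eq_mul, mul_one]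
  ring_nf

def Density.pure (x : Fin n → ℂ) (hx : star x ⬝ᵥ x = 1) : Density n :=
  ⟨vecMulVec x (star x), posSemidef_vecMulVec_self_star x, by
    rw [trace_vecMulVec, dotProduct_comm, hx]⟩

theorem exists_orthogonal_densities {A : Matrix (Fin n) (Fin n) ℂ} (hA : A.IsHermitian) {k : ℕ}
    (hk : A.rank + k ≤ n) :
    ∃ B : Fin k → Density n, Pairwise (fun i j => (B i).1 * (B j).1 = 0) ∧
      ∀ i, A * (B i).1 = 0 := by
  have hu := hA.star_eigenvectorBasis_dotProduct
  have hcard : Fintype.card {j // hA.eigenvalues j = 0} = n - A.rank := by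
    have := Fintype.card_subtype_compl fun j => hA.eigenvalues j ≠ 0
    simp only [not_not] at this
    rw [this, hA.rank_eq_card_non_zero_eigs, Fintype.card_fin]
  obtain ⟨e⟩ : Nonempty (Fin k ↪ {j // hA.eigenvalues j = 0}) :=
    Function.Embedding.nonempty_of_card_le (by rw [hcard, Fintype.card_fin]; omega)
  refine ⟨fun i => Density.pure (hA.eigenvectorBasis (e i)) (by simp [hu]), fun i j hij => ?_,
    fun i => ?_⟩
  · simp [Density.pure, vecMulVec_mul_vecMulVec, hu, Subtype.val_injective.ne (e.injective.ne hij)]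
  · simp only [Density.pure, mul_vecMulVec, hA.mulVec_eigenvectorBasis, (e i).2, zero_smul,
      zero_vecMulVec]

theorem rank_add_le_of_orthogonal_densities {k : ℕ} (A : Matrix (Fin n) (Fin n) ℂ)
    (B : Fin k → Density n) (hB : Pairwise fun i j => (B i).1 * (B j).1 = 0)
    (hAB : ∀ i, A * (B i).1 = 0) : A.rank + k ≤ n := by
  have hB0 : ∀ i, (B i).1 ≠ 0 := fun i h => by simpa [h] using (B i).2.2
  have hBH : ∀ i, (B i).1ᴴ = (B i).1 := fun i => (B i).2.1.isHermitian.eq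
  simpa using rank_add_card_le_of_mul_eq_zero hB0
    (fun i j hij => by simpa only [hBH] using hB hij) hAB

theorem isRankOneProj_of_rank_le_one {A : Matrix (Fin n) (Fin n) ℂ} (hA : A.PosSemidef)
    (htr : A.trace = 1) (hr : A.rank ≤ 1) : IsRankOneProj A := by
  have hsum : ∑ i, hA.isHermitian.eigenvalues i = 1 := by
    have h := hA.isHermitian.trace_eq_sum_eigenvalues.symm.trans htr
    rw [← RCLike.ofReal_sum] at h
    exact RCLike.ofReal_injective (h.trans RCLike.ofReal_one.symm)
  set ev := hA.isHermitian.eigenvalues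
  obtain ⟨i₀, hi₀⟩ : ∃ i, ev i ≠ 0 := by
    by_contra! h
    simp [h] at hsum
  have hzero : ∀ j ≠ i₀, ev j = 0 := fun j hj => by
    by_contra h
    rw [hA.isHermitian.rank_eq_card_non_zero_eigs] at hr
    exact hj (congrArg Subtype.val (Fintype.card_le_one_iff.1 hr ⟨j, h⟩ ⟨i₀, hi₀⟩))
  have hone : ev i₀ = 1 := by
    rwa [Finset.sum_eq_single i₀ (fun j _ hj => hzero j hj) (by simp)] at hsum
  have hdiag : (RCLike.ofReal ∘ ev : Fin n → ℂ) = Pi.single i₀ 1 := funext fun j => by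
    rcases eq_or_ne j i₀ with rfl | hj
    · simp [hone]
    · simp [hzero j hj, hj]
  refine ⟨hA.isHermitian.eigenvectorBasis i₀,
    by simp [hA.isHermitian.star_eigenvectorBasis_dotProduct], ?_⟩
  conv_lhs => rw [hA.isHermitian.spectral_theorem, Unitary.conjStarAlgAut_apply, hdiag,
    diagonal_single, single_eq_single_vecMulVec_single, mul_vecMulVec, vecMulVec_mul,
    star_eq_conjTranspose, vecMul_conjTranspose, hA.isHermitian.eigenvectorUnitary_mulVec]
  simp

theorem Density.isRankOneProj_iff_rank_le_one (A : Density n) :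
    IsRankOneProj A.1 ↔ A.1.rank ≤ 1 := by
  refine ⟨?_, isRankOneProj_of_rank_le_one A.2.1 A.2.2⟩
  rintro ⟨x, -, hx⟩
  exact hx ▸ rank_vecMulVec_le x (star x)

theorem IsRankOneProj.map_of_preserves_orthogonality {φ : Density n → Density n}
    (hφ : ∀ A B : Density n, A.1 * B.1 = 0 → (φ A).1 * (φ B).1 = 0) {P : Density n}
    (hP : IsRankOneProj P.1) : IsRankOneProj (φ P).1 := by
  rw [Density.isRankOneProj_iff_rank_le_one] at hP ⊢
  obtain ⟨B, hB, hPB⟩ := exists_orthogonal_densities P.2.1.isHermitian (k := n - 1)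
    (by have := P.1.rank_le_width; omega)
  have := rank_add_le_of_orthogonal_densities (φ P).1 (φ ∘ B)
    (fun i j hij => hφ _ _ (hB hij)) (fun i => hφ _ _ (hPB i))
  omega

theorem trace_mul_eq_of_dfg_eq {f g : ℝ → ℝ} (hf1 : f 1 ≠ 0) (hg_inj : Set.InjOn g (Set.Ici 0))
    (hg0 : g 0 = 0) {P Q P' Q' : Matrix (Fin n) (Fin n) ℂ} (hP : IsRankOneProj P)
    (hQ : IsRankOneProj Q) (hP' : IsRankOneProj P') (hQ' : IsRankOneProj Q')
    (hD : Dfg f g P' Q' = Dfg f g P Q) : (P' * Q').trace = (P * Q).trace := by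
  obtain ⟨x, -, rfl⟩ := hP
  obtain ⟨y, hy, rfl⟩ := hQ
  obtain ⟨x', -, rfl⟩ := hP'
  obtain ⟨y', hy', rfl⟩ := hQ'
  rw [dfg_vecMulVec hg0 hy, dfg_vecMulVec hg0 hy'] at hD
  have hnonneg : ∀ z, f 1 ^ 2 * Complex.normSq z ∈ Set.Ici 0 := fun z =>
    mul_nonneg (sq_nonneg _) (Complex.normSq_nonneg z)
  rw [trace_vecMulVec_mul_vecMulVec, trace_vecMulVec_mul_vecMulVec,
    mul_left_cancel₀ (pow_ne_zero 2 hf1) (hg_inj (hnonneg _) (hnonneg _) hD)]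

theorem stmt16_general {n : ℕ}
    (f : ℝ → ℝ) (hf_pos : ∀ x ∈ Set.Ioi (0:ℝ), 0 < f x)
    (g : ℝ → ℝ) (hg_nonneg : ∀ x ∈ Set.Ici (0:ℝ), 0 ≤ g x)
    (hg_inj : Set.InjOn g (Set.Ici 0)) (hg0 : g 0 = 0)
    (φ : Density n → Density n)
    (hφ : ∀ A B : Density n, Dfg f g (φ A).1 (φ B).1 = Dfg f g A.1 B.1) :
    (∀ P : Density n, IsRankOneProj P.1 → IsRankOneProj (φ P).1) ∧
    (∀ P Q : Density n, IsRankOneProj P.1 → IsRankOneProj Q.1 →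
      ((φ P).1 * (φ Q).1).trace = (P.1 * Q.1).trace) := by
  have hf : ∀ t ∈ Set.Ioi (0:ℝ), f t ≠ 0 := fun t ht => (hf_pos t ht).ne'
  have hg_zero : ∀ t ∈ Set.Ici (0:ℝ), g t = 0 ↔ t = 0 := fun t ht =>
    ⟨fun h => hg_inj ht (Set.mem_Ici.2 le_rfl) (h.trans hg0.symm), fun h => h ▸ hg0⟩
  have horth : ∀ A B : Density n, A.1 * B.1 = 0 → (φ A).1 * (φ B).1 = 0 := fun A B hAB => by
    rwa [← dfg_eq_zero_iff hf hg_nonneg hg_zero (φ A).2.1 (φ B).2.1, hφ,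
      dfg_eq_zero_iff hf hg_nonneg hg_zero A.2.1 B.2.1]
  have hpure : ∀ P : Density n, IsRankOneProj P.1 → IsRankOneProj (φ P).1 := fun P hP =>
    hP.map_of_preserves_orthogonality horth
  exact ⟨hpure, fun P Q hP hQ => trace_mul_eq_of_dfg_eq (hf 1 (Set.mem_Ioi.2 one_pos)) hg_inj hg0
    hP hQ (hpure P hP) (hpure Q hQ) (hφ P Q)⟩

/-- A map on densities preserving `D'_{f,g}`
(case `lim_{ε→0⁺} f(ε) = 0`, `g` injective) maps rank-one projections
to rank-one projections and preserves the transition probability. -/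
theorem stmt16 {n : ℕ}
    (f : ℝ → ℝ) (hf_pos : ∀ x ∈ Set.Ioi (0:ℝ), 0 < f x)
    (hf_cont : ContinuousOn f (Set.Ioi 0))
    (hf_lim : Filter.Tendsto f (nhdsWithin 0 (Set.Ioi 0)) (nhds 0))
    (g : ℝ → ℝ) (hg_nonneg : ∀ x ∈ Set.Ici (0:ℝ), 0 ≤ g x)
    (hg_cont : ContinuousOn g (Set.Ici 0))
    (hg_inj : Set.InjOn g (Set.Ici 0)) (hg0 : g 0 = 0)
    (φ : Density n → Density n)
    (hφ : ∀ A B : Density n, Dfg f g (φ A).1 (φ B).1 = Dfg f g A.1 B.1) :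
    (∀ P : Density n, IsRankOneProj P.1 → IsRankOneProj (φ P).1) ∧
    (∀ P Q : Density n, IsRankOneProj P.1 → IsRankOneProj Q.1 →
      ((φ P).1 * (φ Q).1).trace = (P.1 * Q.1).trace) :=
  stmt16_general f hf_pos g hg_nonneg hg_inj hg0 φ hφ
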